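/- arXiv:2309.00125 — 2 statements merged into one kernel-verified Lean document; each statement's English description precedes it below -/
import Mathlib

section
/- For a nonnegative real sequence (a_n), the series ∑ (a_n - log(1 + a_n)) converges if and only if the series ∑ a_n² converges. -/
/-!
Both series have nonnegative terms, and `x - log (1 + x)` is squeezed between `x ^ 2 / 4` and
`x ^ 2 / 2` for `0 ≤ x ≤ 1`. The upper bound `x ^ 2 / 2` holds for all `x ≥ 0`, which gives one
direction by comparison. Conversely, `x - log (1 + x) ≥ 1 / 4` for `x ≥ 1`, so summability of
`a n - log (1 + a n)` forces `a n < 1` for all large `n`, where `a n ^ 2` is at most four times the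
term.
-/

namespace Real

theorem sub_log_one_add_nonneg {x : ℝ} (hx : -1 < x) : 0 ≤ x - log (1 + x) := by
  linarith [log_le_sub_one_of_pos (x := 1 + x) (by linarith)]

theorem sub_log_one_add_le_sq_div_two {x : ℝ} (hx : 0 ≤ x) : x - log (1 + x) ≤ x ^ 2 / 2 := by
  have hlog := le_log_one_add_of_nonneg hx
  have hsq : x - 2 * x / (x + 2) ≤ x ^ 2 / 2 := by
    rw [sub_le_iff_le_add, ← sub_le_iff_le_add', le_div_iff₀ (by linarith)]
    nlinarith [sq_nonneg x]
  linarith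

/-- If `t = x - δ ≥ 0` satisfies `δ ≤ t ^ 2 / 2`, then `1 + x ≤ 1 + t + t ^ 2 / 2 ≤ exp t`. -/
theorem le_sub_log_one_add_of_two_mul_le_sq {x δ : ℝ} (hx : -1 < x) (hδx : δ ≤ x)
    (hδ : 2 * δ ≤ (x - δ) ^ 2) : δ ≤ x - log (1 + x) := by
  have hexp : 1 + x ≤ exp (x - δ) := by
    linarith [quadratic_le_exp_of_nonneg (sub_nonneg.mpr hδx)]
  linarith [(log_le_iff_le_exp (by linarith)).mpr hexp]

theorem sq_div_four_le_sub_log_one_add {x : ℝ} (h₀ : 0 ≤ x) (h₁ : x ≤ 1) :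
    x ^ 2 / 4 ≤ x - log (1 + x) :=
  le_sub_log_one_add_of_two_mul_le_sq (by linarith) (by nlinarith)
    (by nlinarith [mul_nonneg h₀ h₀, mul_nonneg (mul_nonneg h₀ h₀) (sub_nonneg.mpr h₁)])

theorem one_div_four_le_sub_log_one_add {x : ℝ} (hx : 1 ≤ x) : 1 / 4 ≤ x - log (1 + x) :=
  le_sub_log_one_add_of_two_mul_le_sq (by linarith) (by linarith) (by nlinarith)

end Real

theorem stmt_0 (a : ℕ → ℝ) (ha : ∀ n, 0 ≤ a n) :
    Summable (fun n => a n - Real.log (1 + a n)) ↔ Summable (fun n => (a n) ^ 2) := by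
  constructor
  · intro hs
    have hsmall : ∀ᶠ n in Filter.atTop, a n < 1 := by
      filter_upwards [hs.tendsto_atTop_zero.eventually (gt_mem_nhds (by norm_num : (0 : ℝ) < 1 / 4))]
        with n hn
      by_contra! h
      linarith [Real.one_div_four_le_sub_log_one_add h]
    refine Summable.of_norm_bounded_eventually_nat (hs.mul_left 4) ?_
    filter_upwards [hsmall] with n hn
    rw [Real.norm_of_nonneg (sq_nonneg _)]
    linarith [Real.sq_div_four_le_sub_log_one_add (ha n) hn.le]
  · intro hs
    exact Summable.of_nonneg_of_le (fun n => Real.sub_log_one_add_nonneg (by linarith [ha n]))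
      (fun n => Real.sub_log_one_add_le_sq_div_two (ha n)) (hs.div_const 2)
end

section
/- Let (λ_j) satisfy c₁ j^{−β} ≤ λ_j ≤ c₂ j^{−β} for constants c₁, c₂ > 0 and β > 1, and let η > 1/2 + 1/β. Then there is a constant c > 0 (depending only on c₁, c₂, β, η) such that for all ψ ∈ (0, 1], ∑_{j=1}^∞ λ_j^{η − 1/2}/(λ_j^η + ψ) ≤ c · ψ^{−(1/η)(1/β + 1/2)}. -/
/-!
Write `a j = λⱼ^(η - 1/2) / (λⱼ^η + ψ)` and put `x = ψ^(-1/(βη))`, so that `λⱼ^η ≈ ψ` for `j ≈ x`.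
For the first `⌈x⌉` terms drop `ψ`: `a j ≤ λⱼ^(-1/2) ≲ j^(β/2)`, and these sum to `≲ x^(β/2 + 1)`.
For the remaining terms drop `λⱼ^η`: `a j ≤ λⱼ^(η - 1/2) / ψ ≲ x^(βη) j^(-γ)` with
`γ = β(η - 1/2) > 1`, and the tail of this `p`-series from `x` on is `≲ x^(βη + 1 - γ) = x^(β/2 + 1)`.
Finally `x^(β/2 + 1) = ψ^(-(1/η)(1/β + 1/2))`.
-/

open Real Finset

theorem mul_rpow_neg_le_rpow_sub_rpow {γ a : ℝ} (hγ : 1 < γ) (ha : 0 < a) :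
    (γ - 1) * (a + 1) ^ (-γ) ≤ a ^ (1 - γ) - (a + 1) ^ (1 - γ) := by
  have hne : ∀ x ∈ Set.Icc a (a + 1), x ≠ 0 := fun x hx => (ha.trans_le hx.1).ne'
  obtain ⟨c, hc, hslope⟩ := exists_hasDerivAt_eq_slope (fun x : ℝ => x ^ (1 - γ))
    (fun x => (1 - γ) * x ^ (1 - γ - 1)) (lt_add_one a)
    (fun x hx => (continuousAt_rpow_const x _ (Or.inl (hne x hx))).continuousWithinAt)
    (fun x hx => hasDerivAt_rpow_const (Or.inl (hne x (Set.Ioo_subset_Icc_self hx))))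
  have hpow : (a + 1) ^ (-γ) ≤ c ^ (-γ) :=
    rpow_le_rpow_of_nonpos (ha.trans hc.1) hc.2.le (by linarith)
  rw [add_sub_cancel_left, div_one, show 1 - γ - 1 = -γ by ring] at hslope
  nlinarith

theorem sum_range_rpow_neg_le {γ a : ℝ} (hγ : 1 < γ) (ha : 0 < a) (n : ℕ) :
    ∑ i ∈ range n, ((i : ℝ) + a + 1) ^ (-γ) ≤ a ^ (1 - γ) / (γ - 1) := by
  rw [le_div_iff₀ (by linarith), sum_mul]
  let f : ℕ → ℝ := fun i => (a + i) ^ (1 - γ)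
  calc ∑ i ∈ range n, ((i : ℝ) + a + 1) ^ (-γ) * (γ - 1)
      ≤ ∑ i ∈ range n, (f i - f (i + 1)) := by
        gcongr with i
        have hstep := mul_rpow_neg_le_rpow_sub_rpow hγ (by positivity : 0 < a + i)
        simp only [f, Nat.cast_succ, ← add_assoc]
        rw [show (i : ℝ) + a + 1 = a + i + 1 by ring]
        linarith
    _ = f 0 - f n := sum_range_sub' f n
    _ ≤ a ^ (1 - γ) := by
        have hfn : 0 ≤ f n := by positivity
        simp only [f, CharP.cast_eq_zero, add_zero]
        linarith

theorem tsum_le_of_le_rpow_of_le_rpow_neg {a : ℕ → ℝ} {A B p γ : ℝ} (hp : 0 ≤ p) (hγ : 1 < γ)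
    (ha : ∀ i, 0 ≤ a i) (hA : ∀ i, a i ≤ A * ((i : ℝ) + 1) ^ p)
    (hB : ∀ i, a i ≤ B * ((i : ℝ) + 1) ^ (-γ)) {J : ℕ} (hJ : 0 < J) :
    ∑' i, a i ≤ A * (J : ℝ) ^ (p + 1) + B * ((J : ℝ) ^ (1 - γ) / (γ - 1)) := by
  have hA0 : 0 ≤ A := by simpa using (ha 0).trans (hA 0)
  have hB0 : 0 ≤ B := by simpa using (ha 0).trans (hB 0)
  have hJ' : (0 : ℝ) < J := Nat.cast_pos.mpr hJ
  have htail : ∀ n, ∑ i ∈ range n, a (i + J) ≤ B * ((J : ℝ) ^ (1 - γ) / (γ - 1)) := fun n =>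
    calc ∑ i ∈ range n, a (i + J)
        ≤ B * ∑ i ∈ range n, ((i : ℝ) + J + 1) ^ (-γ) := by
          rw [mul_sum]
          gcongr with i
          simpa using hB (i + J)
      _ ≤ _ := by gcongr; exact sum_range_rpow_neg_le hγ hJ' n
  have hhead : ∑ i ∈ range J, a i ≤ A * (J : ℝ) ^ (p + 1) :=
    calc ∑ i ∈ range J, a i ≤ ∑ _i ∈ range J, A * (J : ℝ) ^ p := by
          gcongr with i hi
          exact (hA i).trans (by gcongr; exact_mod_cast mem_range.mp hi)
      _ = A * (J : ℝ) ^ (p + 1) := by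
          rw [sum_const, card_range, nsmul_eq_mul, rpow_add_one hJ'.ne']
          ring
  have hs : Summable a :=
    (summable_nat_add_iff J).mp (summable_of_sum_range_le (fun i => ha (i + J)) htail)
  rw [← hs.sum_add_tsum_nat_add J]
  exact add_le_add hhead (Real.tsum_le_of_sum_range_le (fun i => ha (i + J)) htail)

section Termwise

variable {l c t β η ψ : ℝ}

theorem rpow_div_rpow_add_le_of_mul_rpow_neg_le (hc : 0 < c) (ht : 0 < t)
    (hl : c * t ^ (-β) ≤ l) (hψ : 0 ≤ ψ) :
    l ^ (η - 1 / 2) / (l ^ η + ψ) ≤ c ^ (-(1 / 2 : ℝ)) * t ^ (β / 2) := by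
  have hl0 : 0 < l := lt_of_lt_of_le (by positivity) hl
  calc l ^ (η - 1 / 2) / (l ^ η + ψ) ≤ l ^ (η - 1 / 2) / l ^ η := by
        gcongr
        exact le_add_of_nonneg_right hψ
    _ = l ^ (-(1 / 2 : ℝ)) := by rw [← rpow_sub hl0]; ring_nf
    _ ≤ (c * t ^ (-β)) ^ (-(1 / 2 : ℝ)) := rpow_le_rpow_of_nonpos (by positivity) hl (by norm_num)
    _ = c ^ (-(1 / 2 : ℝ)) * t ^ (β / 2) := by
        rw [mul_rpow hc.le (by positivity), ← rpow_mul ht.le]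
        ring_nf

theorem rpow_div_rpow_add_le_of_le_mul_rpow_neg (hc : 0 ≤ c) (ht : 0 ≤ t) (hη : 1 / 2 ≤ η)
    (hl0 : 0 ≤ l) (hl : l ≤ c * t ^ (-β)) (hψ : 0 < ψ) :
    l ^ (η - 1 / 2) / (l ^ η + ψ) ≤ c ^ (η - 1 / 2) / ψ * t ^ (-(β * (η - 1 / 2))) := by
  calc l ^ (η - 1 / 2) / (l ^ η + ψ) ≤ l ^ (η - 1 / 2) / ψ := by
        gcongr
        exact le_add_of_nonneg_left (by positivity)
    _ ≤ (c * t ^ (-β)) ^ (η - 1 / 2) / ψ := by gcongr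
    _ = c ^ (η - 1 / 2) / ψ * t ^ (-(β * (η - 1 / 2))) := by
        rw [mul_rpow hc (by positivity), ← rpow_mul ht]
        ring_nf

end Termwise

theorem tsum_rpow_div_rpow_add_le_of_decay {c₁ c₂ β η x : ℝ} {lam : ℕ → ℝ} (hc₁ : 0 < c₁)
    (hc₂ : 0 < c₂) (hβ : 0 < β) (hγ : 1 < β * (η - 1 / 2))
    (hlow : ∀ j : ℕ, c₁ * ((j : ℝ) + 1) ^ (-β) ≤ lam (j + 1))
    (hhigh : ∀ j : ℕ, lam (j + 1) ≤ c₂ * ((j : ℝ) + 1) ^ (-β)) (hx : 1 ≤ x) :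
    ∑' j : ℕ, lam (j + 1) ^ (η - 1 / 2) / (lam (j + 1) ^ η + x ^ (-(β * η))) ≤
      (c₁ ^ (-(1 / 2 : ℝ)) * 2 ^ (β / 2 + 1) + c₂ ^ (η - 1 / 2) / (β * (η - 1 / 2) - 1)) *
        x ^ (β / 2 + 1) := by
  have hη : 1 / 2 ≤ η := by linarith [pos_of_mul_pos_right (one_pos.trans hγ) hβ.le]
  set γ := β * (η - 1 / 2)
  have hx0 : 0 < x := one_pos.trans_le hx
  have hψ : 0 < x ^ (-(β * η)) := by positivity
  have hlam : ∀ j, 0 < lam (j + 1) := fun j => lt_of_lt_of_le (by positivity) (hlow j)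
  have hterm : ∀ j, 0 ≤ lam (j + 1) ^ (η - 1 / 2) / (lam (j + 1) ^ η + x ^ (-(β * η))) :=
    fun j => by have := hlam j; positivity
  set J := ⌈x⌉₊
  have hJ : 0 < J := Nat.ceil_pos.mpr hx0
  have hxJ : x ≤ J := Nat.le_ceil x
  have hJx : (J : ℝ) ≤ 2 * x := by linarith [Nat.ceil_lt_add_one hx0.le]
  have hhead : (J : ℝ) ^ (β / 2 + 1) ≤ 2 ^ (β / 2 + 1) * x ^ (β / 2 + 1) := by
    rw [← mul_rpow zero_le_two hx0.le]
    gcongr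
  have htail : c₂ ^ (η - 1 / 2) / x ^ (-(β * η)) * ((J : ℝ) ^ (1 - γ) / (γ - 1)) ≤
      c₂ ^ (η - 1 / 2) / (γ - 1) * x ^ (β / 2 + 1) := by
    have hexp : β / 2 + 1 = -(-(β * η)) + (1 - γ) := by ring
    rw [hexp, rpow_add hx0, rpow_neg hx0.le (-(β * η))]
    have hJpow := rpow_le_rpow_of_nonpos hx0 hxJ (by linarith : 1 - γ ≤ 0)
    have hγ1 : 0 < γ - 1 := by linarith
    calc _ = c₂ ^ (η - 1 / 2) / (γ - 1) * ((x ^ (-(β * η)))⁻¹ * (J : ℝ) ^ (1 - γ)) := by ring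
      _ ≤ _ := by gcongr
  calc _ ≤ c₁ ^ (-(1 / 2 : ℝ)) * (J : ℝ) ^ (β / 2 + 1) +
          c₂ ^ (η - 1 / 2) / x ^ (-(β * η)) * ((J : ℝ) ^ (1 - γ) / (γ - 1)) :=
        tsum_le_of_le_rpow_of_le_rpow_neg (by positivity) hγ hterm
          (fun j => rpow_div_rpow_add_le_of_mul_rpow_neg_le hc₁ (by positivity) (hlow j) hψ.le)
          (fun j => rpow_div_rpow_add_le_of_le_mul_rpow_neg hc₂.le (by positivity) hη
            (hlam j).le (hhigh j) hψ) hJ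
    _ ≤ _ := by
        rw [add_mul, mul_assoc]
        gcongr

theorem stmt_13 (c₁ c₂ β η : ℝ) (hc₁ : 0 < c₁) (hc₂ : 0 < c₂) (hβ : 1 < β)
    (hη : 1 / 2 + 1 / β < η)
    (lam : ℕ → ℝ)
    (hlow : ∀ j : ℕ, c₁ * ((j : ℝ) + 1) ^ (-β) ≤ lam (j + 1))
    (hhigh : ∀ j : ℕ, lam (j + 1) ≤ c₂ * ((j : ℝ) + 1) ^ (-β)) :
    ∃ c : ℝ, 0 < c ∧ ∀ ψ : ℝ, 0 < ψ → ψ ≤ 1 →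
      ∑' j : ℕ, lam (j + 1) ^ (η - 1 / 2) / (lam (j + 1) ^ η + ψ) ≤
        c * ψ ^ (-(1 / η) * (1 / β + 1 / 2)) := by
  have hβ0 : 0 < β := one_pos.trans hβ
  have hη0 : 0 < η := by linarith [one_div_pos.mpr hβ0]
  have hγ : 1 < β * (η - 1 / 2) := by
    have := mul_lt_mul_of_pos_left (by linarith : 1 / β < η - 1 / 2) hβ0
    rwa [mul_one_div_cancel hβ0.ne'] at this
  refine ⟨c₁ ^ (-(1 / 2 : ℝ)) * 2 ^ (β / 2 + 1) + c₂ ^ (η - 1 / 2) / (β * (η - 1 / 2) - 1),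
    add_pos (by positivity) (div_pos (by positivity) (sub_pos.mpr hγ)), fun ψ hψ hψ1 => ?_⟩
  -- rescale `ψ = x ^ (-(β * η))`; in terms of `x` the claimed bound is `x ^ (β / 2 + 1)`
  set x := ψ ^ (-(1 / (β * η)))
  have hx : 1 ≤ x := one_le_rpow_of_pos_of_le_one_of_nonpos hψ hψ1 (neg_nonpos.mpr (by positivity))
  have hψx : ψ = x ^ (-(β * η)) := by
    rw [← rpow_mul hψ.le, neg_mul_neg, one_div_mul_cancel (by positivity), rpow_one]
  have hxe : x ^ (β / 2 + 1) = ψ ^ (-(1 / η) * (1 / β + 1 / 2)) := by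
    rw [← rpow_mul hψ.le]
    congr 1
    field_simp
    ring
  rw [← hxe, hψx]
  exact tsum_rpow_div_rpow_add_le_of_decay hc₁ hc₂ hβ0 hγ hlow hhigh hx
end
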